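/- Let (Ω, μ) be a probability space, let f : Ω × [−π, π] → ℝ be jointly measurable with f(ω, x) > 0 for all x and almost every ω, and let c_k(ω) = (1/2π) ∫_{−π}^{π} e^{−ikx} f(ω, x) dx be its Fourier coefficients. Assume each c_k is bounded on Ω and Σ_{k∈ℤ} ‖c_k‖_∞ < ∞, where ‖c_k‖_∞ = sup_{ω∈Ω} |c_k(ω)|. Let T_n(ω) be the n×n Hermitian Toeplitz matrix with entries (T_n)_{k,j} = c_{k−j}(ω), 0 ≤ k, j ≤ n−1, and let S_n(ω) be the Strang circulant preconditioner: S_n(ω) has entries (S_n)_{k,j} = s_{k−j}(ω) where, writing n = 2m+1 (odd case), s_ℓ = c_ℓ for 0 ≤ ℓ ≤ m and s_ℓ = c_{ℓ−n} for m < ℓ ≤ n−1, while for n = 2m (even case) s_ℓ = c_ℓ for 0 ≤ ℓ ≤ m−1, s_m = (c_m + c_{−m})/2, and s_ℓ = c_{ℓ−n} for m < ℓ ≤ n−1; in both cases s_{−ℓ} = conj(s_ℓ) for 0 < ℓ ≤ n−1. For 1 ≤ j ≤ n, let λ_j(S_n(ω) − T_n(ω)) denote the j-th smallest eigenvalue of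 the Hermitian matrix S_n(ω) − T_n(ω). Then for every ε > 0 there exist M > 0 and N > 0 such that for all n > N, at most M of the n eigenvalue functions satisfy sup_{ω∈Ω} |λ_j(S_n(ω) − T_n(ω))| > ε. -/

import Mathlib

open MeasureTheory Filter Matrix

/-- The eigenvalues of a Hermitian matrix, sorted in increasing order
(`sortedEigenvalues hA ⟨k, _⟩` is the `(k+1)`-th smallest eigenvalue, with multiplicity). -/
noncomputable def sortedEigenvalues {n : ℕ} {A : Matrix (Fin n) (Fin n) ℂ}
    (hA : A.IsHermitian) : Fin n → ℝ :=
  hA.eigenvalues ∘ Tuple.sort hA.eigenvalues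

/-- The symbol of the Strang circulant preconditioner for nonnegative offsets `ℓ`:
for `n = 2m+1` it is `c_ℓ` when `ℓ ≤ m` (i.e. `2ℓ < n`) and `c_{ℓ-n}` when `m < ℓ`;
for `n = 2m` it is `c_ℓ` when `ℓ ≤ m-1`, `(c_m + c_{-m})/2` when `ℓ = m` (i.e. `2ℓ = n`),
and `c_{ℓ-n}` when `m < ℓ`. -/
noncomputable def strangPos (c : ℤ → ℂ) (n : ℕ) (ℓ : ℤ) : ℂ :=
  if 2 * ℓ < (n : ℤ) then c ℓ
  else if 2 * ℓ = (n : ℤ) then (c ℓ + c (-ℓ)) / 2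
  else c (ℓ - n)

/-- The full symbol of the Strang circulant preconditioner: `s_{-ℓ} = conj (s_ℓ)`. -/
noncomputable def strangSym (c : ℤ → ℂ) (n : ℕ) (ℓ : ℤ) : ℂ :=
  if 0 ≤ ℓ then strangPos c n ℓ else (starRingEnd ℂ) (strangPos c n (-ℓ))

/-!
On vectors vanishing on the first `N` coordinates, the quadratic form of `S_n(ω) - T_n(ω)` is
small uniformly in `n` and `ω`: the entry at offset `ℓ` vanishes for `|ℓ| < n/2` and is otherwise
bounded by `‖c_ℓ‖_∞ + ‖c_{ℓ-n}‖_∞`, where both indices lie in the tail `|m| ≥ N` of the Wiener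
series, so the Schur test bounds the form by `ε ‖x‖²` once that tail is below `ε/4`.
A subspace of codimension `N` on which `|x* E x| ≤ ε ‖x‖²` meets the span of any `N + 1`
eigenvectors with eigenvalues `> ε` (or `< -ε`) nontrivially, which is impossible; so at most `N`
eigenvalues lie above `ε` and at most `N` below `-ε`. Since the eigenvalues are sorted, these
outliers occupy the first and last `N` indices whatever `ω` is, hence at most `2N` eigenvalue
functions have sup-norm exceeding `ε`.
-/

open Finset

lemma sum_mul_norm_sq_pos {𝕜 ι : Type*} [RCLike 𝕜] [Fintype ι] {w : ι → ℝ} {y : ι → 𝕜}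
    {P : Finset ι} (hy : y ≠ 0) (hyP : ∀ i ∉ P, y i = 0) (hw : ∀ i ∈ P, 0 < w i) :
    0 < ∑ i, w i * ‖y i‖ ^ 2 := by
  obtain ⟨i₀, hi₀⟩ := Function.ne_iff.mp hy
  have hi₀P : i₀ ∈ P := by_contra fun h => hi₀ (hyP i₀ h)
  have hw₀ := hw i₀ hi₀P
  refine sum_pos' (fun i _ => ?_) ⟨i₀, mem_univ _, by positivity⟩
  by_cases hi : i ∈ P
  · have := hw i hi
    positivity
  · simp [hyP i hi]

namespace Matrix

variable {𝕜 ι : Type*} [Fintype ι]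

lemma exists_ne_zero_forall_mulVec_eq_zero [Field 𝕜] [DecidableEq ι] (U : Matrix ι ι 𝕜)
    {P J : Finset ι} (hJP : #J < #P) :
    ∃ y : ι → 𝕜, y ≠ 0 ∧ (∀ i ∉ P, y i = 0) ∧ ∀ j ∈ J, (U *ᵥ y) j = 0 := by
  let Θ : (ι → 𝕜) →ₗ[𝕜] (J → 𝕜) × ((Pᶜ : Finset ι) → 𝕜) :=
    ((LinearMap.funLeft 𝕜 𝕜 Subtype.val).comp (mulVecLin U)).prod
      (LinearMap.funLeft 𝕜 𝕜 Subtype.val)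
  have hdim :
      Module.finrank 𝕜 ((J → 𝕜) × ((Pᶜ : Finset ι) → 𝕜)) < Module.finrank 𝕜 (ι → 𝕜) := by
    simp only [Module.finrank_prod, Module.finrank_fintype_fun_eq_card, Fintype.card_coe,
      card_compl]
    have := P.card_le_univ
    omega
  obtain ⟨y, hyΘ, hy⟩ :=
    Submodule.exists_mem_ne_zero_of_ne_bot (LinearMap.ker_ne_bot_of_finrank_lt hdim)
  refine ⟨y, hy, fun i hi => ?_, fun j hj => ?_⟩
  · simpa [Θ] using congrFun (congrArg Prod.snd (hyΘ : Θ y = 0)) ⟨i, mem_compl.mpr hi⟩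
  · simpa [Θ] using congrFun (congrArg Prod.fst (hyΘ : Θ y = 0)) ⟨j, hj⟩

variable [RCLike 𝕜]

lemma star_dotProduct_self_eq_sum_norm_sq (x : ι → 𝕜) :
    star x ⬝ᵥ x = ((∑ i, ‖x i‖ ^ 2 : ℝ) : 𝕜) := by
  simp [dotProduct, RCLike.conj_mul]

lemma sum_norm_sq_unitary_mulVec [DecidableEq ι] (U : unitaryGroup ι 𝕜) (y : ι → 𝕜) :
    ∑ j, ‖((U : Matrix ι ι 𝕜) *ᵥ y) j‖ ^ 2 = ∑ i, ‖y i‖ ^ 2 := by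
  have h : star ((U : Matrix ι ι 𝕜) *ᵥ y) ⬝ᵥ ((U : Matrix ι ι 𝕜) *ᵥ y) = star y ⬝ᵥ y := by
    rw [star_mulVec, dotProduct_mulVec, vecMul_vecMul, ← star_eq_conjTranspose,
      Unitary.coe_star_mul_self, vecMul_one]
  simpa only [star_dotProduct_self_eq_sum_norm_sq, RCLike.ofReal_inj] using h

lemma norm_star_dotProduct_mulVec_le_of_sum_le (A : Matrix ι ι 𝕜) {W : Finset ι} {ε : ℝ}
    (hrow : ∀ k ∈ W, ∑ j ∈ W, ‖A k j‖ ≤ ε) (hcol : ∀ j ∈ W, ∑ k ∈ W, ‖A k j‖ ≤ ε)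
    {x : ι → 𝕜} (hx : ∀ i ∉ W, x i = 0) :
    ‖star x ⬝ᵥ A *ᵥ x‖ ≤ ε * ∑ j, ‖x j‖ ^ 2 := by
  have hexp : star x ⬝ᵥ A *ᵥ x = ∑ k ∈ W, ∑ j ∈ W, star (x k) * (A k j * x j) := by
    simp only [dotProduct, mulVec, mul_sum, Pi.star_apply]
    rw [← sum_subset (subset_univ W) fun k _ hk => by simp [hx k hk]]
    exact sum_congr rfl fun k _ =>
      (sum_subset (subset_univ W) fun j _ hj => by simp [hx j hj]).symm
  have hW : ∑ j, ‖x j‖ ^ 2 = ∑ j ∈ W, ‖x j‖ ^ 2 :=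
    (sum_subset (subset_univ W) fun i _ hi => by simp [hx i hi]).symm
  have hrow' : ∑ k ∈ W, (∑ j ∈ W, ‖A k j‖) * ‖x k‖ ^ 2 ≤ ε * ∑ k ∈ W, ‖x k‖ ^ 2 := by
    rw [mul_sum]
    exact sum_le_sum fun k hk => mul_le_mul_of_nonneg_right (hrow k hk) (by positivity)
  have hcol' : ∑ j ∈ W, (∑ k ∈ W, ‖A k j‖) * ‖x j‖ ^ 2 ≤ ε * ∑ j ∈ W, ‖x j‖ ^ 2 := by
    rw [mul_sum]
    exact sum_le_sum fun j hj => mul_le_mul_of_nonneg_right (hcol j hj) (by positivity)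
  calc ‖star x ⬝ᵥ A *ᵥ x‖ = ‖∑ k ∈ W, ∑ j ∈ W, star (x k) * (A k j * x j)‖ := by rw [hexp]
    _ ≤ ∑ k ∈ W, ∑ j ∈ W, ‖A k j‖ * (‖x k‖ * ‖x j‖) := by
      refine (norm_sum_le _ _).trans (sum_le_sum fun k _ =>
        (norm_sum_le _ _).trans (sum_le_sum fun j _ => le_of_eq ?_))
      rw [norm_mul, norm_mul, norm_star]
      ring
    _ ≤ ∑ k ∈ W, ∑ j ∈ W, ‖A k j‖ * ((‖x k‖ ^ 2 + ‖x j‖ ^ 2) / 2) := by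
      gcongr with k _ j _
      nlinarith [sq_nonneg (‖x k‖ - ‖x j‖)]
    _ = (∑ k ∈ W, (∑ j ∈ W, ‖A k j‖) * ‖x k‖ ^ 2
        + ∑ j ∈ W, (∑ k ∈ W, ‖A k j‖) * ‖x j‖ ^ 2) / 2 := by
      simp only [sum_mul]
      rw [sum_comm (s := W) (t := W) (f := fun j k => ‖A k j‖ * ‖x j‖ ^ 2), ← sum_add_distrib,
        sum_div]
      refine sum_congr rfl fun k _ => ?_
      rw [← sum_add_distrib, sum_div]
      exact sum_congr rfl fun j _ => by ring
    _ ≤ ε * ∑ j, ‖x j‖ ^ 2 := by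
      rw [hW]
      linarith

namespace IsHermitian

variable [DecidableEq ι] {A : Matrix ι ι 𝕜}

lemma re_star_dotProduct_mulVec_eigenvectorUnitary (hA : A.IsHermitian) (y : ι → 𝕜) :
    RCLike.re (star ((hA.eigenvectorUnitary : Matrix ι ι 𝕜) *ᵥ y) ⬝ᵥ
      A *ᵥ ((hA.eigenvectorUnitary : Matrix ι ι 𝕜) *ᵥ y)) =
      ∑ i, hA.eigenvalues i * ‖y i‖ ^ 2 := by
  have h : star ((hA.eigenvectorUnitary : Matrix ι ι 𝕜) *ᵥ y) ⬝ᵥ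
      A *ᵥ ((hA.eigenvectorUnitary : Matrix ι ι 𝕜) *ᵥ y) =
      star y ⬝ᵥ diagonal (RCLike.ofReal ∘ hA.eigenvalues) *ᵥ y := by
    rw [← hA.conjStarAlgAut_star_eigenvectorUnitary, Unitary.conjStarAlgAut_star_apply,
      star_mulVec, mulVec_mulVec, dotProduct_mulVec, vecMul_vecMul, dotProduct_mulVec,
      star_eq_conjTranspose, ← Matrix.mul_assoc]
  rw [h]
  simp only [dotProduct, mulVec_diagonal, Pi.star_apply, RCLike.star_def, Function.comp_apply,
    mul_left_comm (starRingEnd 𝕜 _), RCLike.conj_mul, map_sum]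
  norm_cast

lemma card_lt_eigenvalues_le (hA : A.IsHermitian) {ε : ℝ} {J : Finset ι}
    (hq : ∀ x : ι → 𝕜, (∀ j ∈ J, x j = 0) →
      RCLike.re (star x ⬝ᵥ A *ᵥ x) ≤ ε * ∑ j, ‖x j‖ ^ 2) :
    #{i | ε < hA.eigenvalues i} ≤ #J := by
  by_contra! h
  obtain ⟨y, hy, hyP, hyJ⟩ :=
    exists_ne_zero_forall_mulVec_eq_zero (hA.eigenvectorUnitary : Matrix ι ι 𝕜) h
  have hpos := sum_mul_norm_sq_pos (w := fun i => hA.eigenvalues i - ε) hy hyP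
    fun i hi => sub_pos.mpr (mem_filter.mp hi).2
  have hle := hq _ hyJ
  rw [re_star_dotProduct_mulVec_eigenvectorUnitary, sum_norm_sq_unitary_mulVec] at hle
  simp only [sub_mul, sum_sub_distrib, ← mul_sum] at hpos
  linarith

lemma card_eigenvalues_lt_neg_le (hA : A.IsHermitian) {ε : ℝ} {J : Finset ι}
    (hq : ∀ x : ι → 𝕜, (∀ j ∈ J, x j = 0) →
      -(ε * ∑ j, ‖x j‖ ^ 2) ≤ RCLike.re (star x ⬝ᵥ A *ᵥ x)) :
    #{i | hA.eigenvalues i < -ε} ≤ #J := by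
  by_contra! h
  obtain ⟨y, hy, hyP, hyJ⟩ :=
    exists_ne_zero_forall_mulVec_eq_zero (hA.eigenvectorUnitary : Matrix ι ι 𝕜) h
  have hpos := sum_mul_norm_sq_pos (w := fun i => -ε - hA.eigenvalues i) hy hyP
    fun i hi => sub_pos.mpr (mem_filter.mp hi).2
  have hle := hq _ hyJ
  rw [re_star_dotProduct_mulVec_eigenvectorUnitary, sum_norm_sq_unitary_mulVec] at hle
  simp only [sub_mul, sum_sub_distrib, neg_mul, sum_neg_distrib, ← mul_sum] at hpos
  linarith

end IsHermitian

end Matrix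

namespace Fin

variable {α : Type*} [LinearOrder α] {n r : ℕ} {f : Fin n → α} {a : α} {j : Fin n}

lemma le_val_add_of_monotone (hf : Monotone f) (hr : #{i | a < f i} ≤ r) (hj : a < f j) :
    n ≤ j + r := by
  have hsub : Ici j ⊆ ({i | a < f i} : Finset (Fin n)) := fun i hi =>
    mem_filter.mpr ⟨mem_univ _, hj.trans_le (hf (mem_Ici.mp hi))⟩
  have := (card_le_card hsub).trans hr
  rw [Fin.card_Ici] at this
  omega

lemma val_lt_of_monotone (hf : Monotone f) (hr : #{i | f i < a} ≤ r) (hj : f j < a) :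
    (j : ℕ) < r := by
  have hsub : Iic j ⊆ ({i | f i < a} : Finset (Fin n)) := fun i hi =>
    mem_filter.mpr ⟨mem_univ _, (hf (mem_Iic.mp hi)).trans_lt hj⟩
  have := (card_le_card hsub).trans hr
  rw [Fin.card_Iic] at this
  omega

lemma card_filter_val_lt_or_le_add_le (n r : ℕ) :
    #{j : Fin n | (j : ℕ) < r ∨ n ≤ j + r} ≤ 2 * r := by
  have hsplit := card_filter_add_card_filter_not (s := univ)
    fun j : Fin n => (j : ℕ) < n - r
  have hhigh :
      ({j | n ≤ j + r} : Finset (Fin n)) = ({j | ¬ (j : ℕ) < n - r} : Finset (Fin n)) := by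
    ext j
    simp only [mem_filter, mem_univ, true_and]
    omega
  rw [filter_or, hhigh]
  refine (card_union_le _ _).trans ?_
  rw [Fin.card_filter_val_lt, card_univ, Fintype.card_fin] at hsplit
  have := Fin.card_filter_val_lt (n := n) (m := r)
  omega

end Fin

lemma lt_or_le_add_of_lt_abs_sortedEigenvalues {n r : ℕ} {A : Matrix (Fin n) (Fin n) ℂ}
    (hA : A.IsHermitian) {ε : ℝ}
    (hq : ∀ x : Fin n → ℂ, (∀ j : Fin n, (j : ℕ) < r → x j = 0) →
      ‖star x ⬝ᵥ A *ᵥ x‖ ≤ ε * ∑ j, ‖x j‖ ^ 2)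
    {j : Fin n} (hj : ε < |sortedEigenvalues hA j|) : (j : ℕ) < r ∨ n ≤ j + r := by
  set J : Finset (Fin n) := {j | (j : ℕ) < r}
  have hJ : #J ≤ r := Fin.card_filter_val_lt.trans_le (min_le_right _ _)
  have hqJ (x : Fin n → ℂ) (hx : ∀ j ∈ J, x j = 0) : ‖star x ⬝ᵥ A *ᵥ x‖ ≤ ε * ∑ j, ‖x j‖ ^ 2 :=
    hq x fun j hj => hx j (mem_filter.mpr ⟨mem_univ _, hj⟩)
  have hmono : Monotone (sortedEigenvalues hA) := Tuple.monotone_sort _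
  have hperm (p : ℝ → Prop) [DecidablePred p] :
      #{j | p (sortedEigenvalues hA j)} = #{i | p (hA.eigenvalues i)} :=
    card_equiv (Tuple.sort hA.eigenvalues) fun i => by
      rw [mem_filter, mem_filter]
      simp [sortedEigenvalues]
  rcases lt_abs.mp hj with h | h
  · refine .inr (Fin.le_val_add_of_monotone hmono ?_ h)
    rw [hperm (ε < ·)]
    exact (hA.card_lt_eigenvalues_le fun x hx => (RCLike.re_le_norm _).trans (hqJ x hx)).trans hJ
  · refine .inl (Fin.val_lt_of_monotone hmono ?_ (lt_neg_of_lt_neg h))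
    rw [hperm (· < -ε)]
    refine (hA.card_eigenvalues_lt_neg_le fun x hx => ?_).trans hJ
    exact (neg_le_neg (hqJ x hx)).trans ((abs_le.mp (RCLike.abs_re_le_norm _)).1)

lemma Summable.exists_sum_le_of_forall_le_natAbs {a : ℤ → ℝ} (ha : Summable a) {δ : ℝ}
    (hδ : 0 < δ) :
    ∃ N : ℕ, ∀ t : Finset ℤ, (∀ m ∈ t, N ≤ m.natAbs) → ∑ m ∈ t, a m ≤ δ := by
  obtain ⟨s, hs⟩ := summable_iff_vanishing_norm.mp ha δ hδ
  refine ⟨s.sup Int.natAbs + 1, fun t ht => ?_⟩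
  have hdisj : Disjoint t s := disjoint_left.mpr fun m hmt hms => by
    have := le_sup (f := Int.natAbs) hms
    have := ht m hmt
    omega
  exact (le_abs_self _).trans (Real.norm_eq_abs _ ▸ hs t hdisj).le

noncomputable def strangCorrectionBound (a : ℤ → ℝ) (n : ℕ) (ℓ : ℤ) : ℝ :=
  if 2 * ℓ < n then 0 else a ℓ + a (ℓ - n)

section StrangCorrection

variable {c : ℤ → ℂ} {a : ℤ → ℝ} {n : ℕ}

lemma norm_strangSym_sub_le (hca : ∀ m, ‖c m‖ ≤ a m) {ℓ : ℤ} (hℓ : 0 ≤ ℓ) :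
    ‖strangSym c n ℓ - c ℓ‖ ≤ strangCorrectionBound a n ℓ := by
  have ha (m : ℤ) : 0 ≤ a m := (norm_nonneg _).trans (hca m)
  simp only [strangSym, strangPos, strangCorrectionBound, if_pos hℓ]
  split_ifs with hlt hmid
  · simp
  · have hsub : ℓ - n = -ℓ := by omega
    have hdiff : (c ℓ + c (-ℓ)) / 2 - c ℓ = (c (-ℓ) - c ℓ) / 2 := by ring
    rw [hsub, hdiff, norm_div, Complex.norm_ofNat]
    linarith [norm_sub_le (c (-ℓ)) (c ℓ), hca ℓ, hca (-ℓ), ha ℓ, ha (-ℓ)]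
  · exact (norm_sub_le _ _).trans (by linarith [hca ℓ, hca (ℓ - n)])

lemma sum_strangCorrectionBound_le {ι : Type*} {N : ℕ} {δ : ℝ}
    (htail : ∀ t : Finset ℤ, (∀ m ∈ t, N ≤ m.natAbs) → ∑ m ∈ t, a m ≤ δ)
    {F : Finset ι} {u : ι → ℤ} (hu : Set.InjOn u F) (hF : ∀ i ∈ F, u i + N < n) :
    ∑ i ∈ F, strangCorrectionBound a n (u i) ≤ 2 * δ := by
  classical
  set F' := F.filter fun i => ¬ 2 * u i < n
  have hu' : Set.InjOn u F' := hu.mono (coe_subset.mpr (filter_subset _ _))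
  have hu'' : Set.InjOn (fun i => u i - n) F' := fun p hp q hq h => hu' hp hq (by simpa using h)
  have hlarge (i) (hi : i ∈ F') : N ≤ (u i).natAbs ∧ N ≤ (u i - n).natAbs := by
    obtain ⟨hiF, hi2⟩ := mem_filter.mp hi
    have := hF i hiF
    omega
  calc ∑ i ∈ F, strangCorrectionBound a n (u i) = ∑ i ∈ F', (a (u i) + a (u i - n)) := by
        rw [sum_filter]
        exact sum_congr rfl fun i _ => by
          simp only [strangCorrectionBound]
          split_ifs <;> rfl
    _ = ∑ m ∈ F'.image u, a m + ∑ m ∈ F'.image (fun i => u i - n), a m := by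
        rw [sum_add_distrib, sum_image hu', sum_image hu'']
    _ ≤ δ + δ := by
        refine add_le_add (htail _ fun m hm => ?_) (htail _ fun m hm => ?_) <;>
          obtain ⟨i, hi, rfl⟩ := mem_image.mp hm
        exacts [(hlarge i hi).1, (hlarge i hi).2]
    _ = 2 * δ := by ring

lemma norm_apply_le_strangCorrectionBound {E : Matrix (Fin n) (Fin n) ℂ} (hE : E.IsHermitian)
    (hca : ∀ m, ‖c m‖ ≤ a m)
    (hEc : ∀ k j : Fin n, E k j = strangSym c n (k - j) - c (k - j)) (k j : Fin n) :
    ‖E k j‖ ≤ strangCorrectionBound a n (k - j) + strangCorrectionBound a n (j - k) := by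
  have hzero (ℓ : ℤ) (hℓ : ℓ ≤ 0) : strangCorrectionBound a n ℓ = 0 :=
    if_pos (by have := k.pos; omega)
  rcases le_total (j : ℤ) k with h | h
  · rw [hzero ((j : ℤ) - k) (by omega), add_zero, hEc]
    exact norm_strangSym_sub_le hca (by omega)
  · rw [hzero ((k : ℤ) - j) (by omega), zero_add, ← hE.apply, norm_star, hEc]
    exact norm_strangSym_sub_le hca (by omega)

lemma norm_star_dotProduct_mulVec_le_of_apply_eq_strangSym_sub {E : Matrix (Fin n) (Fin n) ℂ}
    (hE : E.IsHermitian) (hca : ∀ m, ‖c m‖ ≤ a m)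
    (hEc : ∀ k j : Fin n, E k j = strangSym c n (k - j) - c (k - j)) {N : ℕ} {δ : ℝ}
    (htail : ∀ t : Finset ℤ, (∀ m ∈ t, N ≤ m.natAbs) → ∑ m ∈ t, a m ≤ δ)
    {x : Fin n → ℂ} (hx : ∀ j : Fin n, (j : ℕ) < N → x j = 0) :
    ‖star x ⬝ᵥ E *ᵥ x‖ ≤ 4 * δ * ∑ j, ‖x j‖ ^ 2 := by
  set W : Finset (Fin n) := {j | N ≤ (j : ℕ)}
  have hwindow (k) (hk : k ∈ W) : ∑ j ∈ W,
      (strangCorrectionBound a n (k - j) + strangCorrectionBound a n (j - k)) ≤ 4 * δ := by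
    have hkN := (mem_filter.mp hk).2
    rw [sum_add_distrib]
    have h₁ := sum_strangCorrectionBound_le (n := n) htail (F := W) (u := fun j => (k : ℤ) - j)
      (fun p _ q _ h => Fin.ext (by simpa using h)) fun j hj => by
        have := (mem_filter.mp hj).2
        have := k.isLt
        omega
    have h₂ := sum_strangCorrectionBound_le (n := n) htail (F := W) (u := fun j => (j : ℤ) - k)
      (fun p _ q _ h => Fin.ext (by simpa using h)) fun j hj => by
        have := j.isLt; omega
    linarith
  refine E.norm_star_dotProduct_mulVec_le_of_sum_le (W := W) (fun k hk => ?_) (fun j hj => ?_)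
    fun i hi => hx i (by simpa [W] using hi)
  · exact (sum_le_sum fun j _ =>
      norm_apply_le_strangCorrectionBound hE hca hEc k j).trans (hwindow k hk)
  · exact (sum_le_sum fun k _ => (norm_apply_le_strangCorrectionBound hE hca hEc k j).trans
      (add_comm _ _).le).trans (hwindow j hj)

end StrangCorrection

theorem strang_preconditioner_spectrum_clustering_general
    {Ω : Type*}
    (c : ℤ → Ω → ℂ)
    (hbd : ∀ k : ℤ, BddAbove (Set.range fun ω => ‖c k ω‖))
    (hsum : Summable fun k : ℤ => ⨆ ω, ‖c k ω‖)
    (T S : (n : ℕ) → Ω → Matrix (Fin n) (Fin n) ℂ)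
    (hT : ∀ n ω (k j : Fin n), T n ω k j = c ((k : ℤ) - (j : ℤ)) ω)
    (hS : ∀ n ω (k j : Fin n), S n ω k j = strangSym (fun i => c i ω) n ((k : ℤ) - (j : ℤ)))
    (hherm : ∀ n ω, (S n ω - T n ω).IsHermitian) :
    ∀ ε : ℝ, 0 < ε → ∃ M N : ℕ, ∀ n : ℕ, N < n →
      Set.ncard {j : Fin n | ∃ ω, ε < |sortedEigenvalues (hherm n ω) j|} ≤ M := by
  intro ε hε
  obtain ⟨N, htail⟩ := hsum.exists_sum_le_of_forall_le_natAbs (by positivity : 0 < ε / 4)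
  refine ⟨2 * N, 0, fun n _ => ?_⟩
  have hloc : {j : Fin n | ∃ ω, ε < |sortedEigenvalues (hherm n ω) j|} ⊆
      ↑({j | (j : ℕ) < N ∨ n ≤ j + N} : Finset (Fin n)) := by
    rintro j ⟨ω, hω⟩
    have hq (x : Fin n → ℂ) (hx : ∀ j : Fin n, (j : ℕ) < N → x j = 0) :
        ‖star x ⬝ᵥ (S n ω - T n ω) *ᵥ x‖ ≤ ε * ∑ j, ‖x j‖ ^ 2 := by
      have := norm_star_dotProduct_mulVec_le_of_apply_eq_strangSym_sub (hherm n ω)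
        (fun m => le_ciSup (hbd m) ω) (fun k j => by rw [Matrix.sub_apply, hS, hT]) htail hx
      rwa [mul_div_cancel₀ ε four_ne_zero] at this
    simpa using lt_or_le_add_of_lt_abs_sortedEigenvalues (hherm n ω) hq hω
  calc _ ≤ _ := Set.ncard_le_ncard hloc (finite_toSet _)
    _ = _ := Set.ncard_coe_finset _
    _ ≤ 2 * N := Fin.card_filter_val_lt_or_le_add_le n N

/-- Chan's clustering theorem for random Toeplitz matrices in the Wiener class:
if `f > 0` and `Σ_k sup_ω |c_k(ω)| < ∞`, `T_n(ω)` is the `n × n` Hermitian Toeplitz matrix of the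
Fourier coefficients `c_k(ω)` of `f(ω,·)` and `S_n(ω)` its Strang circulant preconditioner, then
for every `ε > 0` there are `M, N` such that for all `n > N` at most `M` of the `n` eigenvalue
functions of `S_n - T_n` have sup-norm exceeding `ε`. -/
theorem strang_preconditioner_spectrum_clustering
    {Ω : Type*} [MeasurableSpace Ω] (μ : Measure Ω) [IsProbabilityMeasure μ]
    (f : Ω × ℝ → ℝ) (hf : Measurable f)
    (hpos : ∀ᵐ ω ∂μ, ∀ x ∈ Set.Icc (-Real.pi) Real.pi, 0 < f (ω, x))
    (c : ℤ → Ω → ℂ)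
    (hc : ∀ (k : ℤ) (ω : Ω), c k ω = (1 / (2 * (Real.pi : ℂ))) *
      ∫ x in (-Real.pi)..Real.pi, Complex.exp (-Complex.I * (k : ℂ) * (x : ℂ)) * (f (ω, x) : ℂ))
    (hbd : ∀ k : ℤ, BddAbove (Set.range fun ω => ‖c k ω‖))
    (hsum : Summable fun k : ℤ => ⨆ ω, ‖c k ω‖)
    (T S : (n : ℕ) → Ω → Matrix (Fin n) (Fin n) ℂ)
    (hT : ∀ n ω (k j : Fin n), T n ω k j = c ((k : ℤ) - (j : ℤ)) ω)
    (hS : ∀ n ω (k j : Fin n), S n ω k j = strangSym (fun i => c i ω) n ((k : ℤ) - (j : ℤ)))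
    (hherm : ∀ n ω, (S n ω - T n ω).IsHermitian) :
    ∀ ε : ℝ, 0 < ε → ∃ M N : ℕ, ∀ n : ℕ, N < n →
      Set.ncard {j : Fin n | ∃ ω, ε < |sortedEigenvalues (hherm n ω) j|} ≤ M :=
  strang_preconditioner_spectrum_clustering_general c hbd hsum T S hT hS hherm
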